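/- Let K,J ≥ 1, and for reals g_1,…,g_K, g_{⊥,1},…,g_{⊥,J} define the pointwise softmax L2D risk C(g) = Σ_{y=1}^K η_y · (−log softmax_y(g)) + Σ_{j=1}^J p_j · (−log softmax_{⊥,j}(g)), where softmax is over all K+J coordinates, η is a probability vector with all η_y > 0, and p_j ∈ (0,1]. Then any critical point g* of C satisfies softmax_y(g*) = η_y / (1 + Σ_j p_j) for all y and softmax_{⊥,j}(g*) = p_j / (1 + Σ_j p_j) for all j. -/

import Mathlib

/-! Writing `w = (η, p)`, the risk is `(∑ w) · log (∑ exp g) - ∑ wᵢ gᵢ` with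
`∑ w = 1 + ∑ p`. Its partial derivative in `gᵢ` is `(1 + ∑ p) · softmaxᵢ(g) - wᵢ`, so at a
critical point `softmaxᵢ(g) = wᵢ / (1 + ∑ p)`. -/

open Finset Real

noncomputable def softmaxL2D {K J : ℕ} (g : Fin K ⊕ Fin J → ℝ) (i : Fin K ⊕ Fin J) : ℝ :=
  Real.exp (g i) / ∑ i', Real.exp (g i')

noncomputable def softmaxRisk {K J : ℕ} (η : Fin K → ℝ) (p : Fin J → ℝ)
    (g : Fin K ⊕ Fin J → ℝ) : ℝ :=
  (∑ y, η y * (-Real.log (softmaxL2D g (Sum.inl y)))) +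
  (∑ j, p j * (-Real.log (softmaxL2D g (Sum.inr j))))

section Softmax

variable {ι : Type*} [Fintype ι]

theorem sum_mul_neg_log_softmax [Nonempty ι] (w g : ι → ℝ) :
    ∑ i, w i * -log (exp (g i) / ∑ j, exp (g j)) =
      (∑ i, w i) * log (∑ j, exp (g j)) - ∑ i, w i * g i := by
  have hS : 0 < ∑ j, exp (g j) := Finset.sum_pos (fun j _ => exp_pos (g j)) univ_nonempty
  simp only [log_div (exp_ne_zero _) hS.ne', log_exp, Finset.sum_mul, ← Finset.sum_sub_distrib]
  exact Finset.sum_congr rfl fun i _ => by ring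

variable [DecidableEq ι]

theorem hasDerivAt_sum_update (φ : ι → ℝ → ℝ) (g : ι → ℝ) (i : ι) {φ' : ℝ}
    (h : HasDerivAt (φ i) φ' (g i)) :
    HasDerivAt (fun s => ∑ j, φ j (Function.update g i s j)) φ' (g i) := by
  have hsplit : ∀ s, ∑ j, φ j (Function.update g i s j) =
      φ i s + ∑ j ∈ univ.erase i, φ j (g j) := by
    intro s
    rw [← Finset.add_sum_erase _ _ (mem_univ i), Function.update_self]
    congr 1
    exact Finset.sum_congr rfl fun j hj => by rw [Function.update_of_ne (ne_of_mem_erase hj)]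
  simpa only [hsplit] using h.add_const _

theorem hasDerivAt_log_sum_exp_update (g : ι → ℝ) (i : ι) :
    HasDerivAt (fun s => log (∑ j, exp (Function.update g i s j)))
      (exp (g i) / ∑ j, exp (g j)) (g i) := by
  have : Nonempty ι := ⟨i⟩
  have hS : ∑ j, exp (g j) ≠ 0 :=
    (Finset.sum_pos (fun j _ => exp_pos (g j)) univ_nonempty).ne'
  simpa only [Function.update_eq_self] using
    (hasDerivAt_sum_update (fun _ => exp) g i (hasDerivAt_exp (g i))).log
      (by rwa [Function.update_eq_self])

theorem mul_softmax_eq_of_deriv_cross_entropy_eq_zero (w g : ι → ℝ) (i : ι)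
    (hcrit : deriv (fun s => ∑ k, w k * -log (exp (Function.update g i s k) /
      ∑ j, exp (Function.update g i s j))) (g i) = 0) :
    (∑ k, w k) * (exp (g i) / ∑ j, exp (g j)) = w i := by
  have : Nonempty ι := ⟨i⟩
  have hlinear : HasDerivAt (fun s => ∑ k, w k * Function.update g i s k) (w i) (g i) :=
    hasDerivAt_sum_update (fun k x => w k * x) g i
      (by simpa using (hasDerivAt_id (g i)).const_mul (w i))
  have hderiv := ((hasDerivAt_log_sum_exp_update g i).const_mul (∑ k, w k)).fun_sub hlinear
  rw [funext fun s => sum_mul_neg_log_softmax w (Function.update g i s), hderiv.deriv] at hcrit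
  linarith

end Softmax

theorem softmax_risk_critical_point_general (K J : ℕ)
    (η : Fin K → ℝ) (hηsum : ∑ y, η y = 1)
    (p : Fin J → ℝ) (hp : ∀ j, 0 < p j ∧ p j ≤ 1)
    (g : Fin K ⊕ Fin J → ℝ)
    (hcrit : ∀ i, deriv (fun s => softmaxRisk η p (Function.update g i s)) (g i) = 0) :
    (∀ y, softmaxL2D g (Sum.inl y) = η y / (1 + ∑ j, p j)) ∧
    (∀ j, softmaxL2D g (Sum.inr j) = p j / (1 + ∑ j', p j')) := by
  set w : Fin K ⊕ Fin J → ℝ := Sum.elim η p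
  have hrisk : ∀ g', softmaxRisk η p g' = ∑ i, w i * -log (softmaxL2D g' i) :=
    fun g' => (Fintype.sum_sum_type fun i => w i * -log (softmaxL2D g' i)).symm
  have hw : ∑ i, w i = 1 + ∑ j, p j := by
    rw [Fintype.sum_sum_type]
    simp only [w, Sum.elim_inl, Sum.elim_inr, hηsum]
  have hpos : 0 < 1 + ∑ j, p j :=
    add_pos_of_pos_of_nonneg one_pos (sum_nonneg fun j _ => (hp j).1.le)
  have hsoftmax : ∀ i, softmaxL2D g i = w i / (1 + ∑ j, p j) := fun i => by
    rw [eq_div_iff hpos.ne', mul_comm, ← hw]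
    exact mul_softmax_eq_of_deriv_cross_entropy_eq_zero w g i
      (by simpa only [hrisk, softmaxL2D] using hcrit i)
  exact ⟨fun y => hsoftmax (.inl y), fun j => hsoftmax (.inr j)⟩

theorem softmax_risk_critical_point (K J : ℕ) (hK : 1 ≤ K) (hJ : 1 ≤ J)
    (η : Fin K → ℝ) (hη0 : ∀ y, 0 < η y) (hηsum : ∑ y, η y = 1)
    (p : Fin J → ℝ) (hp : ∀ j, 0 < p j ∧ p j ≤ 1)
    (g : Fin K ⊕ Fin J → ℝ)
    (hcrit : ∀ i, deriv (fun s => softmaxRisk η p (Function.update g i s)) (g i) = 0) :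
    (∀ y, softmaxL2D g (Sum.inl y) = η y / (1 + ∑ j, p j)) ∧
    (∀ j, softmaxL2D g (Sum.inr j) = p j / (1 + ∑ j', p j')) :=
  softmax_risk_critical_point_general K J η hηsum p hp g hcrit
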